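/- Let d, m, N be positive integers, let κ > 0 and η ∈ (0,1), and let x₁,…,x_m ∈ ℝ^d satisfy ‖x_j − x_{j'}‖₂ ≥ κ for all j ≠ j'. Let ω₁,…,ω_N be identically distributed random vectors in ℝ^d whose common characteristic function φ(t) = E[exp(i⟨ω, t⟩)] is real-valued and satisfies 0 ≤ φ(t) ≤ η/m for all t with ‖t‖₂ ≥ κ. Let A be the associated random feature matrix. Then the deterministic matrix B = E[(1/N) A A*] − I_m (expectation taken entrywise) satisfies ‖B‖₂ ≤ η. -/

import Mathlib

/-!
Entrywise, `E[(1/N) A Aᴴ]_{jk} = φ(x_j - x_k)`. Hence `B` vanishes on the diagonal (as `φ 0 = 1`),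
and off the diagonal `|B_{jk}| = φ(x_j - x_k) ≤ η / m` by separation. The spectral norm is at most
the Frobenius norm, so `‖B‖ ≤ m · (η / m) = η`.
-/

open Matrix MeasureTheory
open scoped Matrix.Norms.L2Operator RealInnerProductSpace

namespace Matrix

variable {𝕜 m n : Type*} [RCLike 𝕜] [Fintype m] [Fintype n] [DecidableEq n]

lemma l2_opNorm_sq_le_sum_norm_sq (A : Matrix m n 𝕜) :
    ‖A‖ ^ 2 ≤ ∑ i, ∑ j, ‖A i j‖ ^ 2 := by
  set F := ∑ i, ∑ j, ‖A i j‖ ^ 2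
  suffices ‖A‖ ≤ √F by
    simpa [Real.sq_sqrt (by positivity : 0 ≤ F)] using pow_le_pow_left₀ (norm_nonneg _) this 2
  rw [l2_opNorm_def]
  refine ContinuousLinearMap.opNorm_le_bound _ (by positivity) fun v => ?_
  have hrow : ∀ i, ‖(A *ᵥ v) i‖ ^ 2 ≤ (∑ j, ‖A i j‖ ^ 2) * ‖v‖ ^ 2 := fun i => by
    rw [EuclideanSpace.norm_sq_eq]
    calc ‖(A *ᵥ v) i‖ ^ 2 ≤ (∑ j, ‖A i j‖ * ‖v j‖) ^ 2 := by
          gcongr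
          exact (norm_sum_le _ _).trans_eq (by simp [norm_mul])
      _ ≤ (∑ j, ‖A i j‖ ^ 2) * ∑ j, ‖v j‖ ^ 2 := Finset.sum_mul_sq_le_sq_mul_sq _ _ _
  rw [← abs_of_nonneg (norm_nonneg _), ← abs_of_nonneg (by positivity : 0 ≤ √F * ‖v‖),
    ← sq_le_sq, mul_pow, Real.sq_sqrt (by positivity), Finset.sum_mul]
  simpa [EuclideanSpace.norm_sq_eq, toLpLin_apply] using Finset.sum_le_sum fun i _ => hrow i

lemma l2_opNorm_le_card_mul_of_norm_le (A : Matrix n n 𝕜) {c : ℝ} (hc : 0 ≤ c)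
    (h : ∀ i j, ‖A i j‖ ≤ c) : ‖A‖ ≤ Fintype.card n * c := by
  refine pow_le_pow_iff_left₀ (norm_nonneg _) (by positivity) two_ne_zero |>.mp ?_
  calc ‖A‖ ^ 2 ≤ ∑ i, ∑ j, ‖A i j‖ ^ 2 := l2_opNorm_sq_le_sum_norm_sq A
    _ ≤ ∑ _i : n, ∑ _j : n, c ^ 2 := by gcongr with i _ j; exact h i j
    _ = (Fintype.card n * c) ^ 2 := by simp; ring

end Matrix

section RandomFeatures

variable {E ι ρ : Type*} [NormedAddCommGroup E] [InnerProductSpace ℝ E]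

noncomputable def randomFeatureMatrix (x : ρ → E) (ω : ι → E) : Matrix ρ ι ℂ :=
  of fun j k => Complex.exp (Complex.I * (⟪ω k, x j⟫ : ℝ))

lemma randomFeatureMatrix_mul_conjTranspose_apply [Fintype ι] (x : ρ → E) (ω : ι → E) (j k : ρ) :
    (randomFeatureMatrix x ω * (randomFeatureMatrix x ω)ᴴ) j k =
      ∑ l, Complex.exp (Complex.I * (⟪ω l, x j - x k⟫ : ℝ)) := by
  refine Finset.sum_congr rfl fun l _ => ?_
  simp only [randomFeatureMatrix, conjTranspose_apply, of_apply, Complex.star_def,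
    ← Complex.exp_conj, ← Complex.exp_add, map_mul, Complex.conj_I, Complex.conj_ofReal,
    inner_sub_right]
  push_cast
  ring_nf

variable {Ω : Type*} [MeasurableSpace Ω] {μ : Measure Ω}

lemma integrable_exp_I_mul_inner [IsFiniteMeasure μ] {f : Ω → E}
    (hf : AEStronglyMeasurable f μ) (t : E) :
    Integrable (fun ϖ => Complex.exp (Complex.I * (⟪f ϖ, t⟫ : ℝ))) μ :=
  (integrable_const (1 : ℝ)).mono (by fun_prop) (by simp [Complex.norm_exp_I_mul_ofReal])

lemma integral_inv_card_smul_randomFeatureMatrix_mul_conjTranspose_apply [IsFiniteMeasure μ]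
    [Fintype ι] [Nonempty ι] (x : ρ → E) {ω : ι → Ω → E} (hω : ∀ l, AEStronglyMeasurable (ω l) μ)
    {φ : E → ℂ} (hφ : ∀ l t, ∫ ϖ, Complex.exp (Complex.I * (⟪ω l ϖ, t⟫ : ℝ)) ∂μ = φ t)
    (j k : ρ) :
    ∫ ϖ, ((Fintype.card ι : ℂ)⁻¹ •
      (randomFeatureMatrix x (ω · ϖ) * (randomFeatureMatrix x (ω · ϖ))ᴴ)) j k ∂μ =
      φ (x j - x k) := by
  simp only [Matrix.smul_apply, randomFeatureMatrix_mul_conjTranspose_apply, smul_eq_mul]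
  rw [integral_const_mul, integral_finsetSum _ fun l _ => integrable_exp_I_mul_inner (hω l) _]
  simp [hφ]

end RandomFeatures

theorem bias_norm_bound_general
    {d m N : ℕ} (hN0 : 0 < N)
    {Ω : Type*} [MeasurableSpace Ω] (μ : Measure Ω) [IsProbabilityMeasure μ]
    (κ η : ℝ) (hη : η ∈ Set.Ioo (0 : ℝ) 1)
    (x : Fin m → EuclideanSpace ℝ (Fin d))
    (hsep : ∀ j j', j ≠ j' → κ ≤ ‖x j - x j'‖)
    (ω : Fin N → Ω → EuclideanSpace ℝ (Fin d))
    (hmeas : ∀ k, Measurable (ω k))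
    (φ : EuclideanSpace ℝ (Fin d) → ℝ)
    (hφ : ∀ k t, ∫ ϖ, Complex.exp (Complex.I * (⟪ω k ϖ, t⟫ : ℝ)) ∂μ = (φ t : ℂ))
    (hφ_bound : ∀ t, κ ≤ ‖t‖ → 0 ≤ φ t ∧ φ t ≤ η / m)
    (B : Matrix (Fin m) (Fin m) ℂ)
    (hB : B = (Matrix.of fun j k =>
        ∫ ϖ, ((N : ℂ)⁻¹ •
          ((Matrix.of fun j' k' => Complex.exp (Complex.I * (⟪ω k' ϖ, x j'⟫ : ℝ))) *
            (Matrix.of fun j' k' =>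
              Complex.exp (Complex.I * (⟪ω k' ϖ, x j'⟫ : ℝ)))ᴴ)) j k ∂μ) - 1) :
    ‖B‖ ≤ η := by
  have : Nonempty (Fin N) := ⟨⟨0, hN0⟩⟩
  have hφ_zero : φ 0 = 1 := by simpa using (hφ ⟨0, hN0⟩ 0).symm
  have hB_apply (j k) : B j k = φ (x j - x k) - (1 : Matrix (Fin m) (Fin m) ℂ) j k := by
    have := integral_inv_card_smul_randomFeatureMatrix_mul_conjTranspose_apply x
      (fun k => (hmeas k).aestronglyMeasurable) hφ j k
    rw [Fintype.card_fin] at this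
    rw [hB, Matrix.sub_apply, of_apply, ← this]
    rfl
  have hB_entry (j k) : ‖B j k‖ ≤ η / m := by
    rcases eq_or_ne j k with rfl | hjk
    · simpa [hB_apply, hφ_zero] using div_nonneg hη.1.le m.cast_nonneg
    · obtain ⟨hφ_nonneg, hφ_le⟩ := hφ_bound _ (hsep j k hjk)
      simpa [hB_apply, one_apply_ne hjk, abs_of_nonneg hφ_nonneg] using hφ_le
  calc ‖B‖ ≤ m * (η / m) := by
        simpa using l2_opNorm_le_card_mul_of_norm_le B (div_nonneg hη.1.le m.cast_nonneg) hB_entry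
    _ ≤ η := by
        rcases eq_or_ne m 0 with rfl | hm
        · simpa using hη.1.le
        · rw [mul_div_cancel₀ _ (Nat.cast_ne_zero.mpr hm)]

/-- Bias bound in the proof of the concentration theorem: for `κ`-separated
points `x₁, …, x_m` and identically distributed random vectors `ω₁, …, ω_N`
whose common characteristic function `φ` is real-valued and satisfies
`0 ≤ φ(t) ≤ η/m` for all `‖t‖₂ ≥ κ`, the deterministic matrix
`B = E[(1/N) A Aᴴ] − I_m` (expectation entrywise), where `A` is the random
feature matrix `A_{jk} = exp(i⟨ω_k, x_j⟩)`, satisfies `‖B‖₂ ≤ η`. -/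
theorem bias_norm_bound
    {d m N : ℕ} (hd : 0 < d) (hm : 0 < m) (hN0 : 0 < N)
    {Ω : Type*} [MeasurableSpace Ω] (μ : Measure Ω) [IsProbabilityMeasure μ]
    (κ η : ℝ) (hκ : 0 < κ) (hη : η ∈ Set.Ioo (0 : ℝ) 1)
    (x : Fin m → EuclideanSpace ℝ (Fin d))
    (hsep : ∀ j j', j ≠ j' → κ ≤ ‖x j - x j'‖)
    (ω : Fin N → Ω → EuclideanSpace ℝ (Fin d))
    (hmeas : ∀ k, Measurable (ω k))
    (φ : EuclideanSpace ℝ (Fin d) → ℝ)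
    (hφ : ∀ k t, ∫ ϖ, Complex.exp (Complex.I * (⟪ω k ϖ, t⟫ : ℝ)) ∂μ = (φ t : ℂ))
    (hφ_bound : ∀ t, κ ≤ ‖t‖ → 0 ≤ φ t ∧ φ t ≤ η / m)
    (B : Matrix (Fin m) (Fin m) ℂ)
    (hB : B = (Matrix.of fun j k =>
        ∫ ϖ, ((N : ℂ)⁻¹ •
          ((Matrix.of fun j' k' => Complex.exp (Complex.I * (⟪ω k' ϖ, x j'⟫ : ℝ))) *
            (Matrix.of fun j' k' =>
              Complex.exp (Complex.I * (⟪ω k' ϖ, x j'⟫ : ℝ)))ᴴ)) j k ∂μ) - 1) :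
    ‖B‖ ≤ η :=
  bias_norm_bound_general hN0 μ κ η hη x hsep ω hmeas φ hφ hφ_bound B hB
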